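/- Let G(x) = 1/(4π|x|). Under the hypotheses (H1♯): n·d_n → ∞ where d_n = min_{i≠j}|x_i - x_j|, and (H2♯): (1/n)Σ_i ( (1/n)Σ_{j≠i} 1/|x_i - x_j| - ∫ ρ(y)/|x_i - y| dy )² → 0, the quantity Σ_i ∫_{B_i} | Σ_{j≠i}(G(x - x_j) - G(x_i - x_j)) |² dx tends to 0 as n → ∞, where B_i = B(x_i, 1/n). Specifically it is bounded by C/(n d_n)². -/

import Mathlib

open MeasureTheory Metric Filter Topology Real

/-!
For `z ∈ B_i` and `j ≠ i` we have `|z - x_i| < 1/n ≤ d_n/2 ≤ |x_i - x_j|/2`, so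
`|G(z - x_j) - G(x_i - x_j)| ≤ 1 / (2π n d_n |x_i - x_j|)` and the integrand on `B_i` is at most
`(S_i / (2π n d_n))²` with `S_i = Σ_{j≠i} 1/|x_i - x_j|`; since `|B_i| ∼ n⁻³` it remains to see
`Σ_i (S_i/n)² = O(n)`. Writing `S_i/n = (S_i/n - P_i) + P_i`, where `P_i = ∫ ρ(y)/|x_i - y| dy`,
the first part is controlled by (H2♯) and the second by the boundedness of the Newton potential
of `ρ`, which holds because `1/|y|` is locally integrable in `ℝ³`.
-/

noncomputable def newtonKernel {E : Type*} [SeminormedAddCommGroup E] (u : E) : ℝ :=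
  1 / (4 * π * ‖u‖)

lemma abs_inv_sub_inv_le {a b : ℝ} (hb : 0 < b) (hab : |a - b| ≤ b / 2) :
    |a⁻¹ - b⁻¹| ≤ 2 * |a - b| / b ^ 2 := by
  have ha : b / 2 ≤ a := by linarith [abs_le.1 hab]
  have ha0 : 0 < a := by linarith
  rw [inv_sub_inv ha0.ne' hb.ne', abs_div, abs_sub_comm, abs_of_pos (mul_pos ha0 hb),
    div_le_div_iff₀ (mul_pos ha0 hb) (by positivity)]
  have := mul_le_mul_of_nonneg_left (mul_le_mul_of_nonneg_right ha hb.le) (abs_nonneg (a - b))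
  nlinarith

lemma abs_sum_newtonKernel_sub_le {E ι : Type*} [SeminormedAddCommGroup E] (s : Finset ι)
    (p : ι → E) {w z : E} {r δ : ℝ} (hδ : 0 < δ) (hr : 2 * r ≤ δ) (hz : dist z w ≤ r)
    (hsep : ∀ j ∈ s, δ ≤ dist w (p j)) :
    |∑ j ∈ s, (newtonKernel (z - p j) - newtonKernel (w - p j))|
      ≤ r / (2 * π * δ) * ∑ j ∈ s, 1 / dist w (p j) := by
  refine (Finset.abs_sum_le_sum_abs _ _).trans ?_
  rw [Finset.mul_sum]
  refine Finset.sum_le_sum fun j hj => ?_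
  have hb := hsep j hj
  rw [dist_eq_norm] at hb ⊢
  have hab : |‖z - p j‖ - ‖w - p j‖| ≤ r := by
    refine (abs_norm_sub_norm_le _ _).trans ?_
    rwa [sub_sub_sub_cancel_right, ← dist_eq_norm]
  have hb0 : 0 < ‖w - p j‖ := hδ.trans_le hb
  have key := abs_inv_sub_inv_le hb0 (hab.trans (by linarith))
  have h4π : 0 < 4 * π := by positivity
  calc |newtonKernel (z - p j) - newtonKernel (w - p j)|
      = |(4 * π)⁻¹ * (‖z - p j‖⁻¹ - ‖w - p j‖⁻¹)| := by
        unfold newtonKernel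
        ring_nf
    _ = (4 * π)⁻¹ * |‖z - p j‖⁻¹ - ‖w - p j‖⁻¹| := by
        rw [abs_mul, abs_of_pos (inv_pos.2 h4π)]
    _ ≤ (4 * π)⁻¹ * (2 * r / ‖w - p j‖ ^ 2) := by
        gcongr
        exact key.trans (by gcongr)
    _ = r / (2 * π * ‖w - p j‖) * (1 / ‖w - p j‖) := by
        field_simp
        ring
    _ ≤ r / (2 * π * δ) * (1 / ‖w - p j‖) := by
        have hr0 : 0 ≤ r := (dist_nonneg).trans hz
        gcongr

lemma sum_sq_le_two_mul_sum_sq_sub_add {ι : Type*} (s : Finset ι) (a b : ι → ℝ) {K : ℝ}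
    (hb : ∀ i ∈ s, |b i| ≤ K) :
    ∑ i ∈ s, a i ^ 2 ≤ 2 * ∑ i ∈ s, (a i - b i) ^ 2 + 2 * s.card * K ^ 2 := by
  rw [Finset.mul_sum, mul_assoc, ← nsmul_eq_mul, ← Finset.sum_const, Finset.mul_sum,
    ← Finset.sum_add_distrib]
  refine Finset.sum_le_sum fun i hi => ?_
  have := sq_le_sq' (abs_le.1 (hb i hi)).1 (abs_le.1 (hb i hi)).2
  nlinarith [sq_nonneg (a i - 2 * b i)]

lemma inv_dist_le_indicator_add_one {E : Type*} [SeminormedAddCommGroup E] (x y : E) :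
    (dist x y)⁻¹ ≤ (ball (0 : E) 1).indicator (fun u => ‖u‖⁻¹) (x - y) + 1 := by
  rcases lt_or_ge (dist x y) 1 with h | h
  · rw [Set.indicator_of_mem (by simpa [dist_eq_norm] using h), ← dist_eq_norm]
    linarith
  · have : 0 ≤ (ball (0 : E) 1).indicator (fun u => ‖u‖⁻¹) (x - y) :=
      Set.indicator_nonneg (fun u _ => inv_nonneg.2 (norm_nonneg u)) _
    linarith [inv_le_one_of_one_le₀ h]

section NewtonPotential

variable {E : Type*} [NormedAddCommGroup E] [NormedSpace ℝ E] [FiniteDimensional ℝ E]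
  [MeasurableSpace E] [BorelSpace E] {μ : Measure E} [μ.IsAddHaarMeasure]

lemma locallyIntegrable_inv_norm (hE : 2 ≤ Module.finrank ℝ E) :
    LocallyIntegrable (fun u : E => ‖u‖⁻¹) μ :=
  locallyIntegrable_of_norm_le_rpow (C := 1) (α := 1) (by omega) (by exact_mod_cast hE)
    (ae_of_all _ fun u => by simp [Real.rpow_neg_one])
    measurable_norm.inv.aestronglyMeasurable

/-- Splitting `1 / |x - y|` at distance `1` gives a majorant whose integral does not depend
on `x`. -/
theorem exists_forall_abs_integral_div_dist_le (hE : 2 ≤ Module.finrank ℝ E) {ρ : E → ℝ}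
    (hρ_bdd : ∃ M, ∀ y, |ρ y| ≤ M) (hρ_supp : HasCompactSupport ρ) :
    ∃ K, ∀ x, |∫ y, ρ y / dist x y ∂μ| ≤ K := by
  obtain ⟨M, hM⟩ := hρ_bdd
  have hM0 : 0 ≤ M := (abs_nonneg _).trans (hM 0)
  set F := (ball (0 : E) 1).indicator (fun u => ‖u‖⁻¹)
  set S := tsupport ρ
  have hF : Integrable F μ := (integrable_indicator_iff measurableSet_ball).2
    (((locallyIntegrable_inv_norm hE).integrableOn_isCompact
      (isCompact_closedBall 0 1)).mono_set ball_subset_closedBall)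
  have hS : Integrable (S.indicator (1 : E → ℝ)) μ :=
    (integrable_indicator_iff (isClosed_tsupport ρ).measurableSet).2
      (integrableOn_const hρ_supp.measure_lt_top.ne)
  refine ⟨M * (∫ u, F u ∂μ + μ.real S), fun x => ?_⟩
  have hmaj : Integrable (fun y => M * (F (x - y) + S.indicator 1 y)) μ :=
    ((hF.comp_sub_left x).add hS).const_mul M
  have hle : ∀ y, ‖ρ y / dist x y‖ ≤ M * (F (x - y) + S.indicator 1 y) := by
    intro y
    by_cases hy : y ∈ S
    · rw [Set.indicator_of_mem hy, norm_div, norm_of_nonneg dist_nonneg, div_eq_mul_inv,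
        Real.norm_eq_abs]
      exact mul_le_mul (hM y) (inv_dist_le_indicator_add_one x y) (inv_nonneg.2 dist_nonneg) hM0
    · rw [image_eq_zero_of_notMem_tsupport hy, zero_div, norm_zero]
      exact mul_nonneg hM0 (add_nonneg (Set.indicator_nonneg (fun u _ => inv_nonneg.2
        (norm_nonneg u)) _) (Set.indicator_nonneg (fun _ _ => zero_le_one) _))
  calc |∫ y, ρ y / dist x y ∂μ| ≤ ∫ y, M * (F (x - y) + S.indicator 1 y) ∂μ :=
        norm_integral_le_of_norm_le hmaj (ae_of_all _ hle)
    _ = M * (∫ u, F u ∂μ + μ.real S) := by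
        rw [integral_const_mul, integral_add (hF.comp_sub_left x) hS,
          integral_sub_left_eq_self, integral_indicator_one (isClosed_tsupport ρ).measurableSet]

end NewtonPotential

lemma setIntegral_ball_le_of_abs_le {E : Type*} [NormedAddCommGroup E] [NormedSpace ℝ E]
    [FiniteDimensional ℝ E] [MeasurableSpace E] [BorelSpace E] {μ : Measure E}
    [μ.IsAddHaarMeasure] {f : E → ℝ} {w : E} {r c : ℝ} (hr : 0 < r)
    (hf : ∀ z ∈ ball w r, |f z| ≤ c) :
    ∫ z in ball w r, f z ∂μ ≤ c * (r ^ Module.finrank ℝ E * μ.real (ball 0 1)) := by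
  calc ∫ z in ball w r, f z ∂μ ≤ ‖∫ z in ball w r, f z ∂μ‖ := le_abs_self _
    _ ≤ c * μ.real (ball w r) := norm_setIntegral_le_of_norm_le_const measure_ball_lt_top hf
    _ = c * (r ^ Module.finrank ℝ E * μ.real (ball 0 1)) := by
        rw [measureReal_def, Measure.addHaar_ball_of_pos μ w hr, ENNReal.toReal_mul,
          ENNReal.toReal_ofReal (by positivity), measureReal_def]

local notation "E3" => EuclideanSpace ℝ (Fin 3)

lemma integral_ball_sq_sum_newtonKernel_sub_le {N : ℕ} (p : Fin N → E3) (i : Fin N)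
    {r δ : ℝ} (hr : 0 < r) (hδ : 0 < δ) (hrδ : 2 * r ≤ δ)
    (hsep : ∀ j, i ≠ j → δ ≤ dist (p i) (p j)) :
    ∫ z in ball (p i) r,
        |∑ j ∈ Finset.univ.erase i, (newtonKernel (z - p j) - newtonKernel (p i - p j))| ^ 2
      ≤ (r / (2 * π * δ) * ∑ j ∈ Finset.univ.erase i, 1 / dist (p i) (p j)) ^ 2
          * (r ^ 3 * volume.real (ball (0 : E3) 1)) := by
  refine (setIntegral_ball_le_of_abs_le hr fun z hz => ?_).trans_eq
    (by rw [finrank_euclideanSpace_fin])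
  rw [abs_pow, abs_abs]
  exact pow_le_pow_left₀ (abs_nonneg _) (abs_sum_newtonKernel_sub_le _ p hδ hrδ
    (mem_ball.1 hz).le fun j hj => hsep j (Finset.ne_of_mem_erase hj).symm) 2

theorem sum_integral_sq_sum_newtonKernel_sub_le {N : ℕ} (p : Fin N → E3) (P : Fin N → ℝ)
    {δ K : ℝ} (hδ : 0 < δ) (hNδ : 2 ≤ N * δ) (hsep : ∀ i j, i ≠ j → δ ≤ dist (p i) (p j))
    (hP : ∀ i, |P i| ≤ K) :
    ∑ i, ∫ z in ball (p i) (1 / N),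
        |∑ j ∈ Finset.univ.erase i, (newtonKernel (z - p j) - newtonKernel (p i - p j))| ^ 2
      ≤ volume.real (ball (0 : E3) 1) * (2 * ((1 / N) * ∑ i, ((1 / N) *
          ∑ j ∈ Finset.univ.erase i, 1 / dist (p i) (p j) - P i) ^ 2) + 2 * K ^ 2)
          / (4 * π ^ 2) / (N * δ) ^ 2 := by
  have hN : (0 : ℝ) < N := pos_of_mul_pos_left (by linarith) hδ.le
  set V := volume.real (ball (0 : E3) 1)
  set S := fun i => (1 / N) * ∑ j ∈ Finset.univ.erase i, 1 / dist (p i) (p j)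
  calc _ ≤ ∑ i, (1 / N / (2 * π * δ) * ∑ j ∈ Finset.univ.erase i, 1 / dist (p i) (p j)) ^ 2
          * ((1 / N) ^ 3 * V) := by
        gcongr with i
        refine integral_ball_sq_sum_newtonKernel_sub_le p i (by positivity) hδ ?_ (hsep i)
        rw [mul_one_div, div_le_iff₀ hN]
        linarith
    _ = V / (4 * π ^ 2 * δ ^ 2 * N ^ 3) * ∑ i, S i ^ 2 := by
        rw [Finset.mul_sum]
        refine Finset.sum_congr rfl fun i _ => ?_
        simp only [S]
        field_simp
        ring
    _ ≤ V / (4 * π ^ 2 * δ ^ 2 * N ^ 3) * (2 * ∑ i, (S i - P i) ^ 2 + 2 * N * K ^ 2) := by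
        gcongr
        simpa using sum_sq_le_two_mul_sum_sq_sub_add Finset.univ S P fun i _ => hP i
    _ = V * (2 * ((1 / N) * ∑ i, (S i - P i) ^ 2) + 2 * K ^ 2) / (4 * π ^ 2) / (N * δ) ^ 2 := by
        generalize ∑ i, (S i - P i) ^ 2 = T
        field_simp

/-- Under (H1♯): `n d_n → ∞` with `d_n` the minimal inter-point distance, and (H2♯):
`(1/n) Σ_i ((1/n) Σ_{j≠i} 1/|x_i - x_j| - ∫ ρ(y)/|x_i - y| dy)² → 0`, the quantity
`Σ_i ∫_{B_i} |Σ_{j≠i} (G(x - x_j) - G(x_i - x_j))|² dx` (with `G(x) = 1/(4π|x|)` and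
`B_i = B(x_i, 1/n)`) tends to `0`; in fact it is eventually bounded by `C/(n d_n)²`. -/
theorem stmt8 (x : (n : ℕ) → Fin n → EuclideanSpace ℝ (Fin 3))
    (ρ : EuclideanSpace ℝ (Fin 3) → ℝ)
    (hρbdd : ∃ M, ∀ y, |ρ y| ≤ M) (hρsupp : HasCompactSupport ρ)
    (d : ℕ → ℝ) (hd_pos : ∀ n, 0 < d n)
    (hd_min : ∀ n, ∀ i j : Fin n, i ≠ j → d n ≤ dist (x n i) (x n j))
    (H1s : Tendsto (fun n : ℕ => (n : ℝ) * d n) atTop atTop)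
    (H2s : Tendsto (fun n : ℕ => (1 / (n : ℝ)) * ∑ i : Fin n,
      ((1 / (n : ℝ)) * ∑ j ∈ Finset.univ.erase i, 1 / dist (x n i) (x n j)
        - ∫ y, ρ y / dist (x n i) y) ^ 2) atTop (𝓝 0)) :
    (∃ C : ℝ, 0 < C ∧ ∀ᶠ n in atTop,
      (∑ i : Fin n, ∫ z in ball (x n i) (1 / n),
        |∑ j ∈ Finset.univ.erase i,
          (1 / (4 * π * ‖z - x n j‖) - 1 / (4 * π * ‖x n i - x n j‖))| ^ 2)
        ≤ C / ((n : ℝ) * d n) ^ 2) ∧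
    Tendsto (fun n : ℕ => ∑ i : Fin n, ∫ z in ball (x n i) (1 / n),
        |∑ j ∈ Finset.univ.erase i,
          (1 / (4 * π * ‖z - x n j‖) - 1 / (4 * π * ‖x n i - x n j‖))| ^ 2)
      atTop (𝓝 0) := by
  obtain ⟨K, hK⟩ := exists_forall_abs_integral_div_dist_le (μ := volume)
    (by simp : 2 ≤ Module.finrank ℝ E3) hρbdd hρsupp
  set V := volume.real (ball (0 : E3) 1)
  have hV : 0 < V := ENNReal.toReal_pos (measure_ball_pos volume 0 one_pos).ne'
    measure_ball_lt_top.ne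
  have hbound : ∀ᶠ n : ℕ in atTop, (∑ i : Fin n, ∫ z in ball (x n i) (1 / n),
      |∑ j ∈ Finset.univ.erase i, (newtonKernel (z - x n j) - newtonKernel (x n i - x n j))| ^ 2)
      ≤ V * (2 + 2 * K ^ 2) / (4 * π ^ 2) / ((n : ℝ) * d n) ^ 2 := by
    filter_upwards [H1s.eventually_ge_atTop 2, H2s.eventually (eventually_le_nhds one_pos)]
      with n hnd hH2
    refine (sum_integral_sq_sum_newtonKernel_sub_le (x n) _ (hd_pos n) hnd (hd_min n)
      fun i => hK (x n i)).trans ?_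
    gcongr
    linarith
  refine ⟨⟨_, by positivity, hbound⟩, squeeze_zero' ?_ hbound ?_⟩
  · exact Eventually.of_forall fun n => Finset.sum_nonneg fun i _ =>
      setIntegral_nonneg measurableSet_ball fun z _ => by positivity
  · exact tendsto_const_nhds.div_atTop ((tendsto_pow_atTop two_ne_zero).comp H1s)
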